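/- arXiv:1708.00826 — 12 statements merged into one kernel-verified Lean document; each statement's English description precedes it below -/
import Mathlib

section
/- For every k ∈ ℝ³, the Weyl walk symbol W(k) = Σ_{i=1}^{4} (exp(i (hᵢ·k)) • Aᵢ + exp(−i (hᵢ·k)) • Bᵢ) is a unitary 2×2 complex matrix (i.e. W(k) ∈ Matrix.unitaryGroup (Fin 2) ℂ). -/
open Matrix Complex

/-- `η⁺ = (1+i)/4`. -/
noncomputable def etaP : ℂ := (1 + Complex.I) / 4
/-- `η⁻ = (1−i)/4`. -/
noncomputable def etaM : ℂ := (1 - Complex.I) / 4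

/-- Transition matrices `A₁, A₂, A₃, A₄` of the Weyl walk. -/
noncomputable def WeylA : Fin 4 → Matrix (Fin 2) (Fin 2) ℂ :=
  ![!![etaP, 0; etaP, 0], !![0, etaP; 0, etaP],
    !![0, -etaP; 0, etaP], !![etaP, 0; -etaP, 0]]

/-- Transition matrices `B₁, B₂, B₃, B₄` of the Weyl walk. -/
noncomputable def WeylB : Fin 4 → Matrix (Fin 2) (Fin 2) ℂ :=
  ![!![0, -etaM; 0, etaM], !![etaM, 0; -etaM, 0],
    !![etaM, 0; etaM, 0], !![0, etaM; 0, etaM]]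

/-- BCC generators `h₁ = (1,1,1)`, `h₂ = (1,−1,−1)`, `h₃ = (−1,1,−1)`, `h₄ = (−1,−1,1)`. -/
def bccH : Fin 4 → Fin 3 → ℝ :=
  ![![1, 1, 1], ![1, -1, -1], ![-1, 1, -1], ![-1, -1, 1]]

/-- The Weyl walk symbol `W(k) = Σᵢ (e^{i hᵢ·k} Aᵢ + e^{−i hᵢ·k} Bᵢ)`. -/
noncomputable def WeylSymbol (k : Fin 3 → ℝ) : Matrix (Fin 2) (Fin 2) ℂ :=
  ∑ i : Fin 4,
    (Complex.exp (Complex.I * ((bccH i ⬝ᵥ k : ℝ) : ℂ)) • WeylA i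
      + Complex.exp (-(Complex.I * ((bccH i ⬝ᵥ k : ℝ) : ℂ))) • WeylB i)

/-!
Writing `σₓ, σ_y, σ_z` for the Pauli matrices, the symbol factors as
`W(k) = exp(i k₀ σₓ) · exp(i k₁ σ_y) · exp(i k₂ σ_z)`: expanding `e^{±i hᵢ·k}` by the addition
formulas, the coefficients `η^±` recombine into products of `cos kⱼ` and `sin kⱼ`. Each factor has
the Cayley–Klein shape `[[z, -w̄], [w, z̄]]` with `|z|² + |w|² = 1`, hence is unitary, and so is
their product.
-/

theorem Matrix.cayleyKlein_mem_unitaryGroup {R : Type*} [CommRing R] [StarRing R] {z w : R}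
    (h : star z * z + star w * w = 1) :
    !![z, -star w; w, star z] ∈ unitaryGroup (Fin 2) R := by
  rw [mem_unitaryGroup_iff', star_eq_conjTranspose, eta_fin_two !![z, -star w; w, star z]ᴴ,
    mul_fin_two, one_fin_two]
  ext i j
  fin_cases i <;> fin_cases j <;>
    simp only [Fin.isValue, conjTranspose_apply, of_apply, cons_val', cons_val_zero, cons_val_fin_one,
      cons_val_one, mul_neg, star_neg, star_star, neg_mul, neg_neg, Fin.zero_eta, Fin.mk_one]
  · exact h
  · ring
  · ring
  · linear_combination h

theorem Complex.star_exp_I_mul_ofReal (θ : ℝ) : star (exp (I * θ)) = exp (-(I * θ)) := by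
  rw [star_def, ← exp_conj, map_mul, conj_I, conj_ofReal, neg_mul]

theorem Complex.ofReal_cos_sq_add_ofReal_sin_sq (θ : ℝ) :
    (Real.cos θ : ℂ) ^ 2 + (Real.sin θ : ℂ) ^ 2 = 1 := by
  exact_mod_cast Real.cos_sq_add_sin_sq θ

noncomputable def expPauliX (θ : ℝ) : Matrix (Fin 2) (Fin 2) ℂ :=
  !![(Real.cos θ : ℂ), I * Real.sin θ; I * Real.sin θ, Real.cos θ]

noncomputable def expPauliY (θ : ℝ) : Matrix (Fin 2) (Fin 2) ℂ :=
  !![(Real.cos θ : ℂ), Real.sin θ; -Real.sin θ, Real.cos θ]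

noncomputable def expPauliZ (θ : ℝ) : Matrix (Fin 2) (Fin 2) ℂ :=
  !![exp (I * θ), 0; 0, exp (-(I * θ))]

theorem expPauliX_mem_unitaryGroup (θ : ℝ) : expPauliX θ ∈ unitaryGroup (Fin 2) ℂ := by
  have h := cayleyKlein_mem_unitaryGroup (z := (Real.cos θ : ℂ)) (w := I * Real.sin θ) (by
    simp only [star_mul', star_def, conj_I, conj_ofReal]
    linear_combination ofReal_cos_sq_add_ofReal_sin_sq θ - (Real.sin θ : ℂ) ^ 2 * I_sq)
  rw [expPauliX]
  simpa only [star_mul', star_def, conj_I, conj_ofReal, neg_mul, neg_neg] using h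

theorem expPauliY_mem_unitaryGroup (θ : ℝ) : expPauliY θ ∈ unitaryGroup (Fin 2) ℂ := by
  have h := cayleyKlein_mem_unitaryGroup (z := (Real.cos θ : ℂ)) (w := -Real.sin θ) (by
    simp only [star_neg, star_def, conj_ofReal]
    linear_combination ofReal_cos_sq_add_ofReal_sin_sq θ)
  rw [expPauliY]
  simpa only [star_neg, star_def, conj_ofReal, neg_neg] using h

theorem expPauliZ_mem_unitaryGroup (θ : ℝ) : expPauliZ θ ∈ unitaryGroup (Fin 2) ℂ := by
  have h := cayleyKlein_mem_unitaryGroup (z := exp (I * θ)) (w := 0) (by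
    rw [star_exp_I_mul_ofReal, ← exp_add, neg_add_cancel, exp_zero, star_zero, mul_zero, add_zero])
  rw [expPauliZ]
  simpa only [star_exp_I_mul_ofReal, star_zero, neg_zero] using h

theorem weylSymbol_eq_expPauli_mul (k : Fin 3 → ℝ) :
    WeylSymbol k = expPauliX (k 0) * expPauliY (k 1) * expPauliZ (k 2) := by
  ext i j
  fin_cases i <;> fin_cases j <;>
    simp [WeylSymbol, Fin.sum_univ_four, WeylA, WeylB, bccH, dotProduct, Fin.sum_univ_three,
      expPauliX, expPauliY, expPauliZ, etaP, etaM, Complex.ext_iff, Complex.exp_re, Complex.exp_im,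
      Complex.cos_ofReal_re, Complex.sin_ofReal_re, Real.cos_add, Real.sin_add] <;>
    constructor <;> ring

/-- The Weyl walk symbol is unitary for every `k ∈ ℝ³`. -/
theorem weylSymbol_mem_unitaryGroup :
    ∀ k : Fin 3 → ℝ, WeylSymbol k ∈ Matrix.unitaryGroup (Fin 2) ℂ := by
  intro k
  rw [weylSymbol_eq_expPauli_mul]
  exact mul_mem (mul_mem (expPauliX_mem_unitaryGroup _) (expPauliY_mem_unitaryGroup _))
    (expPauliZ_mem_unitaryGroup _)
end

section
/- Let a, b be positive reals and φ, ψ complex numbers with |φ| = |ψ| = 1. Define the 2×2 complex matrices A₁ = (a/√2)·!![φ,0; ψ,0], A₂ = (a/√2)·!![0,ψ; 0,φ], A₃ = (a/√2)·!![0,−ψ; 0,φ], A₄ = (a/√2)·!![φ,0; −ψ,0], B₁ = (b/√2)·!![0,−conj(ψ); 0,conj(φ)], B₂ = (b/√2)·!![conj(φ),0; −conj(ψ),0], B₃ = (b/√2)·!![conj(φ),0; conj(ψ),0], B₄ = (b/√2)·!![0,conj(ψ); 0,conj(φ)]. If for every k ∈ ℝ³ the matrix Σ_{i=1}^{4} (exp(i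 (hᵢ·k)) • Aᵢ + exp(−i (hᵢ·k)) • Bᵢ) is unitary, then a = 1/2, b = 1/2, φ² + conj(φ)² = 0 and ψ² + conj(ψ)² = 0. -/
/-!
Three wave vectors suffice. Write `c = a/√2`, `d = b/√2`. At `k = (π/4, π/4, 0)` the rows of
the symbol have squared norms `8d²` and `8c²`, so `a = b = 1/2`. Then at `k = 0` and `k = (π/2, 0, 0)` the first row has a
single nonzero entry, `(φ + φ̄)/√2` resp. `i(ψ + ψ̄)/√2`, so `|φ + φ̄|² = 2`. As `φ + φ̄` is real this
reads `(φ + φ̄)² = 2 = 2φφ̄`, i.e. `φ² + φ̄² = 0`, and likewise for `ψ`.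
-/

open Matrix Complex

/-- The isotropy-covariant ansatz for the forward transition matrices:
`A₁ = (a/√2)!![φ,0; ψ,0]`, `A₂ = (a/√2)!![0,ψ; 0,φ]`, `A₃ = (a/√2)!![0,−ψ; 0,φ]`,
`A₄ = (a/√2)!![φ,0; −ψ,0]`. -/
noncomputable def ansatzA (a : ℝ) (φ ψ : ℂ) : Fin 4 → Matrix (Fin 2) (Fin 2) ℂ :=
  ![((a / Real.sqrt 2 : ℝ) : ℂ) • !![φ, 0; ψ, 0],
    ((a / Real.sqrt 2 : ℝ) : ℂ) • !![0, ψ; 0, φ],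
    ((a / Real.sqrt 2 : ℝ) : ℂ) • !![0, -ψ; 0, φ],
    ((a / Real.sqrt 2 : ℝ) : ℂ) • !![φ, 0; -ψ, 0]]

/-- The isotropy-covariant ansatz for the backward transition matrices:
`B₁ = (b/√2)!![0,−ψ*; 0,φ*]`, `B₂ = (b/√2)!![φ*,0; −ψ*,0]`, `B₃ = (b/√2)!![φ*,0; ψ*,0]`,
`B₄ = (b/√2)!![0,ψ*; 0,φ*]`. -/
noncomputable def ansatzB (b : ℝ) (φ ψ : ℂ) : Fin 4 → Matrix (Fin 2) (Fin 2) ℂ :=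
  ![((b / Real.sqrt 2 : ℝ) : ℂ) • !![0, -(starRingEnd ℂ ψ); 0, starRingEnd ℂ φ],
    ((b / Real.sqrt 2 : ℝ) : ℂ) • !![starRingEnd ℂ φ, 0; -(starRingEnd ℂ ψ), 0],
    ((b / Real.sqrt 2 : ℝ) : ℂ) • !![starRingEnd ℂ φ, 0; starRingEnd ℂ ψ, 0],
    ((b / Real.sqrt 2 : ℝ) : ℂ) • !![0, starRingEnd ℂ ψ; 0, starRingEnd ℂ φ]]

open ComplexConjugate
open scoped Real

theorem Matrix.sum_norm_sq_row_eq_one_of_mem_unitaryGroup {n 𝕜 : Type*} [RCLike 𝕜] [Fintype n]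
    [DecidableEq n] {U : Matrix n n 𝕜} (hU : U ∈ Matrix.unitaryGroup n 𝕜) (i : n) :
    ∑ j, ‖U i j‖ ^ 2 = 1 := by
  have hdiag := congrFun (congrFun (Matrix.mem_unitaryGroup_iff.mp hU) i) i
  simp only [Matrix.mul_apply, Matrix.star_apply, RCLike.star_def, RCLike.mul_conj,
    Matrix.one_apply_eq] at hdiag
  exact_mod_cast hdiag

theorem Complex.sq_add_conj_sq_eq_zero_of_norm_add_conj_sq {z : ℂ} (hz : ‖z‖ = 1)
    (h : ‖z + conj z‖ ^ 2 = 2) : z ^ 2 + conj z ^ 2 = 0 := by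
  have hre : (z + conj z) ^ 2 = 2 := by
    rw [add_conj, norm_real, Real.norm_eq_abs, sq_abs] at h
    rw [add_conj, ← ofReal_pow, h]; norm_num
  have hnorm : z * conj z = 1 := by
    rw [mul_conj, normSq_eq_norm_sq, hz]; norm_num
  linear_combination hre - 2 * hnorm

theorem norm_div_sqrt_two_sq (x : ℝ) : ‖x / √2‖ ^ 2 = x ^ 2 / 2 := by
  rw [Real.norm_eq_abs, sq_abs, div_pow, Real.sq_sqrt zero_le_two]

section
variable (a b : ℝ) (φ ψ : ℂ)

theorem sum_smul_ansatz_eq (e f : Fin 4 → ℂ) :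
    ∑ i, (e i • ansatzA a φ ψ i + f i • ansatzB b φ ψ i) =
      let c : ℂ := ((a / √2 : ℝ) : ℂ)
      let d : ℂ := ((b / √2 : ℝ) : ℂ)
      !![c * φ * (e 0 + e 3) + d * conj φ * (f 1 + f 2),
          c * ψ * (e 1 - e 2) + d * conj ψ * (f 3 - f 0);
        c * ψ * (e 0 - e 3) + d * conj ψ * (f 2 - f 1),
          c * φ * (e 1 + e 2) + d * conj φ * (f 0 + f 3)] := by
  ext i j
  fin_cases i <;> fin_cases j <;>
    simp [Fin.sum_univ_four, ansatzA, ansatzB] <;> ring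

noncomputable def bccSymbol (k : Fin 3 → ℝ) : Matrix (Fin 2) (Fin 2) ℂ :=
  ∑ i : Fin 4, (exp (I * ((bccH i ⬝ᵥ k : ℝ) : ℂ)) • ansatzA a φ ψ i
    + exp (-(I * ((bccH i ⬝ᵥ k : ℝ) : ℂ))) • ansatzB b φ ψ i)

theorem bccSymbol_zero :
    bccSymbol a b φ ψ 0 =
      let z := 2 * (((a / √2 : ℝ) : ℂ) * φ + ((b / √2 : ℝ) : ℂ) * conj φ)
      !![z, 0; 0, z] := by
  rw [bccSymbol, sum_smul_ansatz_eq]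
  ext i j
  fin_cases i <;> fin_cases j <;> simp <;> ring

theorem bccSymbol_pi_div_four :
    bccSymbol a b φ ψ ![π / 4, π / 4, 0] =
      !![2 * ((b / √2 : ℝ) : ℂ) * conj φ, 2 * I * ((b / √2 : ℝ) : ℂ) * conj ψ;
        2 * I * ((a / √2 : ℝ) : ℂ) * ψ, 2 * ((a / √2 : ℝ) : ℂ) * φ] := by
  have h : ∀ i, bccH i ⬝ᵥ ![π / 4, π / 4, 0] = ![π / 2, 0, 0, -(π / 2)] i := by
    intro i; fin_cases i <;> simp [bccH, dotProduct, Fin.sum_univ_three] <;> ring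
  rw [bccSymbol, sum_smul_ansatz_eq]
  simp only [h]
  ext i j
  fin_cases i <;> fin_cases j <;> simp [mul_comm I, exp_neg] <;> ring

theorem bccSymbol_pi_div_two :
    bccSymbol a b φ ψ ![π / 2, 0, 0] =
      let z := 2 * I * (((a / √2 : ℝ) : ℂ) * ψ + ((b / √2 : ℝ) : ℂ) * conj ψ)
      !![0, z; z, 0] := by
  have h : ∀ i, bccH i ⬝ᵥ ![π / 2, 0, 0] = ![π / 2, π / 2, -(π / 2), -(π / 2)] i := by
    intro i; fin_cases i <;> simp [bccH, dotProduct, Fin.sum_univ_three]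
  rw [bccSymbol, sum_smul_ansatz_eq]
  simp only [h]
  ext i j
  fin_cases i <;> fin_cases j <;> simp [mul_comm I, exp_neg] <;> ring

theorem eq_half_of_bccSymbol_pi_div_four_mem_unitaryGroup (ha : 0 < a) (hb : 0 < b)
    (hφ : ‖φ‖ = 1) (hψ : ‖ψ‖ = 1)
    (hU : bccSymbol a b φ ψ ![π / 4, π / 4, 0] ∈ unitaryGroup (Fin 2) ℂ) :
    a = 1 / 2 ∧ b = 1 / 2 := by
  have hrow := Matrix.sum_norm_sq_row_eq_one_of_mem_unitaryGroup hU
  have hrow0 := hrow 0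
  have hrow1 := hrow 1
  simp only [Fin.sum_univ_two, bccSymbol_pi_div_four, of_apply, cons_val', cons_val_zero,
    cons_val_one, empty_val', cons_val_fin_one, norm_mul, mul_pow, norm_real, norm_I, hφ, hψ,
    Complex.norm_conj, norm_div_sqrt_two_sq] at hrow0 hrow1
  norm_num at hrow0 hrow1
  constructor <;> nlinarith

end

theorem sq_add_conj_sq_eq_zero_of_bccSymbol_zero_mem_unitaryGroup {φ : ℂ} (ψ : ℂ) (hφ : ‖φ‖ = 1)
    (hU : bccSymbol (1 / 2) (1 / 2) φ ψ 0 ∈ unitaryGroup (Fin 2) ℂ) :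
    φ ^ 2 + conj φ ^ 2 = 0 := by
  have hrow := Matrix.sum_norm_sq_row_eq_one_of_mem_unitaryGroup hU 0
  simp only [Fin.sum_univ_two, bccSymbol_zero, ← mul_add, norm_mul, mul_pow, of_apply, cons_val',
    cons_val_zero, cons_val_one, empty_val', cons_val_fin_one, norm_zero, norm_real,
    norm_div_sqrt_two_sq] at hrow
  exact Complex.sq_add_conj_sq_eq_zero_of_norm_add_conj_sq hφ (by norm_num at hrow; linarith)

theorem sq_add_conj_sq_eq_zero_of_bccSymbol_pi_div_two_mem_unitaryGroup (φ : ℂ) {ψ : ℂ}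
    (hψ : ‖ψ‖ = 1)
    (hU : bccSymbol (1 / 2) (1 / 2) φ ψ ![π / 2, 0, 0] ∈ unitaryGroup (Fin 2) ℂ) :
    ψ ^ 2 + conj ψ ^ 2 = 0 := by
  have hrow := Matrix.sum_norm_sq_row_eq_one_of_mem_unitaryGroup hU 0
  simp only [Fin.sum_univ_two, bccSymbol_pi_div_two, ← mul_add, norm_mul, mul_pow, of_apply,
    cons_val', cons_val_zero, cons_val_one, empty_val', cons_val_fin_one, norm_zero, norm_real,
    norm_I, norm_div_sqrt_two_sq] at hrow
  exact Complex.sq_add_conj_sq_eq_zero_of_norm_add_conj_sq hψ (by norm_num at hrow; linarith)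

/-- If the symbol of the isotropy-covariant ansatz walk on the BCC lattice is unitary for
every `k ∈ ℝ³`, then `a = b = 1/2`, `φ² + φ*² = 0` and `ψ² + ψ*² = 0`. -/
theorem ansatz_unitary_conditions (a b : ℝ) (ha : 0 < a) (hb : 0 < b) (φ ψ : ℂ)
    (hφ : ‖φ‖ = 1) (hψ : ‖ψ‖ = 1)
    (hU : ∀ k : Fin 3 → ℝ,
      (∑ i : Fin 4,
        (Complex.exp (Complex.I * ((bccH i ⬝ᵥ k : ℝ) : ℂ)) • ansatzA a φ ψ i
          + Complex.exp (-(Complex.I * ((bccH i ⬝ᵥ k : ℝ) : ℂ))) • ansatzB b φ ψ i))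
        ∈ Matrix.unitaryGroup (Fin 2) ℂ) :
    a = 1 / 2 ∧ b = 1 / 2 ∧ φ ^ 2 + (starRingEnd ℂ φ) ^ 2 = 0
      ∧ ψ ^ 2 + (starRingEnd ℂ ψ) ^ 2 = 0 := by
  obtain ⟨rfl, rfl⟩ :=
    eq_half_of_bccSymbol_pi_div_four_mem_unitaryGroup a b φ ψ ha hb hφ hψ (hU _)
  exact ⟨rfl, rfl, sq_add_conj_sq_eq_zero_of_bccSymbol_zero_mem_unitaryGroup ψ hφ (hU 0),
    sq_add_conj_sq_eq_zero_of_bccSymbol_pi_div_two_mem_unitaryGroup φ hψ (hU _)⟩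
end

section
/- Let B be any 2×2 complex matrix. If for every k ∈ ℝ³ the matrix W(k) + B is unitary, where W(k) = Σ_{i=1}^{4} (exp(i (hᵢ·k)) • Aᵢ + exp(−i (hᵢ·k)) • Bᵢ) is the Weyl walk symbol, then B = 0. (The three-dimensional Weyl walk admits no self-interaction term.) -/
/-!
Since `∑ᵢ (Aᵢ + Bᵢ) = 1`, the symbol is `W(k) = 1` at `k = 0`, where all phases are `1`, and
`W(k) = -1` at `k = (π, 0, 0)`, where every `hᵢ·k = ±π` makes all phases `-1`. If both `1 + B`
and `-1 + B` are unitary, adding `(1 + B)ᴴ(1 + B) = 1` and `(-1 + B)ᴴ(-1 + B) = 1` cancels the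
cross terms and leaves `2 BᴴB = 0`, hence `B = 0`.
-/

open Matrix Complex

theorem star_mul_self_add_star_mul_self_eq_zero {R : Type*} [Ring R] [StarRing R] {b : R}
    (h₁ : star (1 + b) * (1 + b) = 1) (h₂ : star (-1 + b) * (-1 + b) = 1) :
    star b * b + star b * b = 0 :=
  calc star b * b + star b * b
        = (star (1 + b) * (1 + b) - 1) + (star (-1 + b) * (-1 + b) - 1) := by
          simp only [star_add, star_one, star_neg]; noncomm_ring
    _ = 0 := by rw [h₁, h₂, sub_self, add_zero]

open scoped ComplexOrder in
theorem Matrix.eq_zero_of_one_add_mem_unitaryGroup_of_neg_one_add {n 𝕜 : Type*} [Fintype n]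
    [DecidableEq n] [RCLike 𝕜] {B : Matrix n n 𝕜} (h₁ : 1 + B ∈ unitaryGroup n 𝕜)
    (h₂ : -1 + B ∈ unitaryGroup n 𝕜) : B = 0 := by
  have h := star_mul_self_add_star_mul_self_eq_zero h₁.1 h₂.1
  rw [← two_smul 𝕜, smul_eq_zero, star_eq_conjTranspose] at h
  exact h.resolve_left two_ne_zero |> conjTranspose_mul_self_eq_zero.mp

theorem sum_weylA_add_weylB : ∑ i, (WeylA i + WeylB i) = 1 := by
  ext i j
  fin_cases i <;> fin_cases j <;>
    simp [Fin.sum_univ_four, WeylA, WeylB, etaP, etaM] <;> ring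

theorem weylSymbol_eq_smul_one_of_phases {k : Fin 3 → ℝ} {c : ℂ}
    (h : ∀ i, Complex.exp (Complex.I * ((bccH i ⬝ᵥ k : ℝ) : ℂ)) = c)
    (h' : ∀ i, Complex.exp (-(Complex.I * ((bccH i ⬝ᵥ k : ℝ) : ℂ))) = c) :
    WeylSymbol k = c • 1 := by
  simp only [WeylSymbol, h, h', ← smul_add, ← Finset.smul_sum, sum_weylA_add_weylB]

theorem weylSymbol_zero : WeylSymbol 0 = 1 := by
  simpa using weylSymbol_eq_smul_one_of_phases (k := 0) (c := 1) (by simp) (by simp)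

theorem weylSymbol_pi : WeylSymbol ![Real.pi, 0, 0] = -1 := by
  have h : ∀ i, bccH i ⬝ᵥ ![Real.pi, 0, 0] = Real.pi ∨
      bccH i ⬝ᵥ ![Real.pi, 0, 0] = -Real.pi := by
    intro i
    fin_cases i <;> simp [bccH, dotProduct, Fin.sum_univ_three]
  refine (weylSymbol_eq_smul_one_of_phases (c := -1) ?_ ?_).trans (by simp) <;>
    intro i <;> rcases h i with hi | hi <;> simp [hi, mul_comm I]

/-- The three-dimensional Weyl walk admits no self-interaction term: if `W(k) + B` is
unitary for every `k ∈ ℝ³`, then `B = 0`. -/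
theorem weyl_no_self_interaction (B : Matrix (Fin 2) (Fin 2) ℂ)
    (hU : ∀ k : Fin 3 → ℝ, WeylSymbol k + B ∈ Matrix.unitaryGroup (Fin 2) ℂ) :
    B = 0 := by
  have h₁ := hU 0
  have h₂ := hU ![Real.pi, 0, 0]
  rw [weylSymbol_zero] at h₁
  rw [weylSymbol_pi] at h₂
  exact eq_zero_of_one_add_mem_unitaryGroup_of_neg_one_add h₁ h₂
end

section
/- Let α be a positive real number. Then the 2×2 complex matrix exp(i k₁) • (α • !![1,0; 1,0]) + exp(−i k₁) • (α • !![0,−1; 0,1]) + exp(i k₂) • (α • !![0,1; 0,1]) + exp(−i k₂) • (α • !![1,0; −1,0]) is unitary for every k = (k₁,k₂) ∈ ℝ² if and only if α = 1/2. -/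
open Matrix Complex

lemma aux_unit_matrix (x y : ℂ) (hx0 : x ≠ 0) (hy0 : y ≠ 0) (hx : (starRingEnd ℂ) x = x⁻¹)
    (hy : (starRingEnd ℂ) y = y⁻¹) :
  !![(x + y⁻¹) * (2⁻¹ : ℂ), (-x⁻¹ + y) * 2⁻¹; (x - y⁻¹) * 2⁻¹, (x⁻¹ + y) * 2⁻¹]
    ∈ Matrix.unitaryGroup (Fin 2) ℂ := by
  rw [Matrix.mem_unitaryGroup_iff]
  ext i j
  fin_cases i <;> fin_cases j <;>
    simp [Matrix.mul_apply, Fin.sum_univ_two, Matrix.conjTranspose_apply, hx, hy,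
      Complex.conj_ofNat] <;>
    field_simp <;> ring

/-- The walk symbol of the isotropic walk on the square lattice `ℤ²` with transition
matrices `α!![1,0;1,0]`, `α!![0,−1;0,1]`, `α!![0,1;0,1]`, `α!![1,0;−1,0]` is unitary for
every `k = (k₁,k₂) ∈ ℝ²` if and only if `α = 1/2`. -/
theorem square_walk_unitary_iff (α : ℝ) (hα : 0 < α) :
    (∀ k₁ k₂ : ℝ,
      Complex.exp (Complex.I * (k₁ : ℂ)) • ((α : ℂ) • !![(1 : ℂ), 0; 1, 0])
        + Complex.exp (-(Complex.I * (k₁ : ℂ))) • ((α : ℂ) • !![(0 : ℂ), -1; 0, 1])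
        + Complex.exp (Complex.I * (k₂ : ℂ)) • ((α : ℂ) • !![(0 : ℂ), 1; 0, 1])
        + Complex.exp (-(Complex.I * (k₂ : ℂ))) • ((α : ℂ) • !![(1 : ℂ), 0; -1, 0])
        ∈ Matrix.unitaryGroup (Fin 2) ℂ)
      ↔ α = 1 / 2 := by
  constructor
  · intro h
    have h0 := h 0 0
    rw [Matrix.mem_unitaryGroup_iff] at h0
    have h00 := congr_fun (congr_fun h0 0) 0
    simp [Matrix.mul_apply, Fin.sum_univ_two, Matrix.smul_apply, star, conjTranspose] at h00
    have hr := congrArg Complex.re h00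
    simp [Complex.mul_re] at hr
    nlinarith
  · intro hhalf k₁ k₂
    subst hhalf
    set x := Complex.exp (Complex.I * (k₁ : ℂ)) with hxdef
    set y := Complex.exp (Complex.I * (k₂ : ℂ)) with hydef
    have hx0 : x ≠ 0 := Complex.exp_ne_zero _
    have hy0 : y ≠ 0 := Complex.exp_ne_zero _
    have hxinv : Complex.exp (-(Complex.I * (k₁ : ℂ))) = x⁻¹ := by
      rw [hxdef, Complex.exp_neg]
    have hyinv : Complex.exp (-(Complex.I * (k₂ : ℂ))) = y⁻¹ := by
      rw [hydef, Complex.exp_neg]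
    have hxc : (starRingEnd ℂ) x = x⁻¹ := by
      rw [hxdef, ← Complex.exp_conj, ← Complex.exp_neg]
      congr 1
      simp [Complex.conj_ofReal]
    have hyc : (starRingEnd ℂ) y = y⁻¹ := by
      rw [hydef, ← Complex.exp_conj, ← Complex.exp_neg]
      congr 1
      simp [Complex.conj_ofReal]
    have key := aux_unit_matrix x y hx0 hy0 hxc hyc
    convert key using 1
    rw [hxinv, hyinv]
    ext i j
    fin_cases i <;> fin_cases j <;>
      · simp [Matrix.smul_apply]
        ring
end

section
/- Let B be any 2×2 complex matrix. If for every k = (k₁,k₂) ∈ ℝ² the matrix (1/2) • ( exp(i k₁) • !![1,0; 1,0] + exp(−i k₁) • !![0,−1; 0,1] + exp(i k₂) • !![0,1; 0,1] + exp(−i k₂) • !![1,0; −1,0] ) + B is unitary, then B = 0. (The two-dimensional isotropic walk on the square lattice admits no self-interaction term.) -/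
open Matrix Complex

/-- The two-dimensional isotropic walk on the square lattice admits no self-interaction
term: if the symbol plus `B` is unitary for every `k = (k₁,k₂) ∈ ℝ²`, then `B = 0`. -/
theorem square_walk_no_self_interaction (B : Matrix (Fin 2) (Fin 2) ℂ)
    (hU : ∀ k₁ k₂ : ℝ,
      (1 / 2 : ℂ) • (Complex.exp (Complex.I * (k₁ : ℂ)) • !![(1 : ℂ), 0; 1, 0]
        + Complex.exp (-(Complex.I * (k₁ : ℂ))) • !![(0 : ℂ), -1; 0, 1]
        + Complex.exp (Complex.I * (k₂ : ℂ)) • !![(0 : ℂ), 1; 0, 1]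
        + Complex.exp (-(Complex.I * (k₂ : ℂ))) • !![(1 : ℂ), 0; -1, 0]) + B
        ∈ Matrix.unitaryGroup (Fin 2) ℂ) :
    B = 0 := by
  have hpi : Complex.exp (Complex.I * (Real.pi : ℂ)) = -1 := by
    rw [mul_comm]; exact Complex.exp_pi_mul_I
  have hpi' : Complex.exp (-(Complex.I * (Real.pi : ℂ))) = -1 := by
    rw [Complex.exp_neg, hpi]; norm_num
  have h1 := hU Real.pi 0
  have h2 := hU 0 Real.pi
  simp only [Complex.ofReal_zero, mul_zero, neg_zero, Complex.exp_zero, hpi, hpi',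
    one_smul, neg_one_smul] at h1 h2
  set M : Matrix (Fin 2) (Fin 2) ℂ := !![0, 1; -1, 0] with hM
  have e1 : (1 / 2 : ℂ) • (-!![(1 : ℂ), 0; 1, 0] + -!![(0 : ℂ), -1; 0, 1]
      + !![(0 : ℂ), 1; 0, 1] + !![(1 : ℂ), 0; -1, 0]) = M := by
    ext i j; fin_cases i <;> fin_cases j <;>
      simp [hM, Matrix.smul_apply] <;> norm_num
  have e2 : (1 / 2 : ℂ) • (!![(1 : ℂ), 0; 1, 0] + !![(0 : ℂ), -1; 0, 1]
      + -!![(0 : ℂ), 1; 0, 1] + -!![(1 : ℂ), 0; -1, 0]) = -M := by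
    ext i j; fin_cases i <;> fin_cases j <;>
      simp [hM, Matrix.smul_apply] <;> norm_num
  rw [e1] at h1
  rw [e2] at h2
  have u1 : star (M + B) * (M + B) = 1 := Matrix.mem_unitaryGroup_iff'.mp h1
  have u2 : star (-M + B) * (-M + B) = 1 := Matrix.mem_unitaryGroup_iff'.mp h2
  have hMM : star M * M = 1 := by
    rw [hM]; ext i j; fin_cases i <;> fin_cases j <;>
      simp [Matrix.mul_apply, Fin.sum_univ_two, Matrix.one_apply]
  have key : star B * B = 0 := by
    have expand : star (M + B) * (M + B) + star (-M + B) * (-M + B)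
        = 2 • (star M * M) + 2 • (star B * B) := by
      simp only [star_add, star_neg, add_mul, mul_add, neg_mul, mul_neg, neg_neg]
      abel
    rw [u1, u2, hMM] at expand
    have h2' : (2 : ℂ) • (star B * B) = 0 := by
      have h := expand.symm
      rw [← sub_eq_zero] at h
      rw [← sub_eq_zero]
      convert h using 1
      push_cast [two_smul]
      abel
    simpa using h2'
  open ComplexOrder in
  exact Matrix.conjTranspose_mul_self_eq_zero.mp key
end

section
/- Let G be a group and S a subset of G with S⁻¹ = S whose subgroup closure is all of G. Let l : G → G and λ : G → G be maps such that λ restricted to S is a bijection of S onto S, l(h) = λ(h) for every h ∈ S, and l(g·h) = l(g)·λ(h) for every g ∈ G and h ∈ S. Then l(1) = 1 and l(g·g') = l(g)·l(g') for all g, g' ∈ G; i.e., every automorphism of the Cayley graph Γ(G,S) acting as a permutation of the edge colours is a group automorphism of G. -/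
/-- Every automorphism of a Cayley graph `Γ(G,S)` (with `S` symmetric and generating)
that acts as a permutation `λ` of the colours `S` fixes the identity and is a group
automorphism of `G`. -/
theorem cayley_graph_automorphism_is_group_automorphism {G : Type*} [Group G]
    (S : Set G) (hSinv : S⁻¹ = S) (hSgen : Subgroup.closure S = ⊤)
    (l lam : G → G) (hlam : Set.BijOn lam S S)
    (hagree : ∀ h ∈ S, l h = lam h)
    (hcov : ∀ g : G, ∀ h ∈ S, l (g * h) = l g * lam h) :
    l 1 = 1 ∧ ∀ g g' : G, l (g * g') = l g * l g' := by
  have h1 : l 1 = 1 := by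
    rcases S.eq_empty_or_nonempty with hS | ⟨h, hh⟩
    · subst hS
      have : (⊥ : Subgroup G) = ⊤ := by simpa using hSgen
      have htriv : ∀ x : G, x = 1 := fun x => by
        have hx : x ∈ (⊥ : Subgroup G) := this ▸ Subgroup.mem_top x
        exact Subgroup.mem_bot.mp hx
      exact htriv _
    · have := hcov 1 h hh
      rw [one_mul, hagree h hh] at this
      exact mul_right_cancel (a := l 1) (b := lam h) (c := 1)
        (by rw [one_mul]; exact this.symm)
  refine ⟨h1, fun g g' => ?_⟩
  have key : ∀ g' : G, ∀ g : G, l (g * g') = l g * l g' := by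
    have hmem : ∀ x : G, x ∈ Subgroup.closure S := by
      intro x; rw [hSgen]; trivial
    intro g'
    induction hmem g' using Subgroup.closure_induction with
    | mem s hs =>
      intro g
      rw [hcov g s hs, hagree s hs]
    | one => intro g; rw [mul_one, h1, mul_one]
    | mul x y hx hy ihx ihy =>
      intro g
      have hxy : l (x * y) = l x * l y := by
        have := ihy x; simpa using this
      rw [← mul_assoc, ihy (g * x), ihx g, hxy, mul_assoc]
    | inv x hx ihx =>
      intro g
      have hinv : l x⁻¹ = (l x)⁻¹ := by
        have := ihx x⁻¹
        rw [inv_mul_cancel, h1] at this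
        exact eq_inv_of_mul_eq_one_left this.symm
      have := ihx (g * x⁻¹)
      rw [mul_assoc, inv_mul_cancel, mul_one] at this
      rw [hinv, eq_mul_inv_iff_mul_eq, ← this]
  exact key g' g
end

section
/- Let d, s ≥ 1, let S be a finite set of vectors in ℤ^d, and let A assign to each h ∈ S an s×s complex matrix A_h. For k ∈ ℝ^d set A_k = Σ_{h ∈ S} exp(i (h·k)) • A_h, where h·k = Σ_j h_j k_j. Then A_k is unitary for every k ∈ ℝ^d if and only if all of the following hold: Σ_{h ∈ S} A_h A_hᴴ = 1, Σ_{h ∈ S} A_hᴴ A_h = 1, and for every nonzero m ∈ ℤ^d, Σ_{(h,h') ∈ S×S, h−h' = m} A_h A_{h'}ᴴ = 0 and Σ_{(h,h') ∈ S×S, h−h' = m} A_{h'}ᴴ A_h = 0. -/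
open Matrix

namespace WalkAux

variable {d s : ℕ}

noncomputable def ek (m : Fin d → ℤ) (k : Fin d → ℝ) : ℂ :=
  Complex.exp (Complex.I * ((∑ j, (m j : ℝ) * k j : ℝ) : ℂ))

theorem ek_zero (k : Fin d → ℝ) : ek (0 : Fin d → ℤ) k = 1 := by
  simp [ek]

theorem ek_add (m m' : Fin d → ℤ) (k : Fin d → ℝ) :
    ek (m + m') k = ek m k * ek m' k := by
  rw [ek, ek, ek, ← Complex.exp_add]
  congr 1
  have : (∑ j, (((m + m') j : ℤ) : ℝ) * k j) = (∑ j, (m j : ℝ) * k j) + (∑ j, (m' j : ℝ) * k j) := by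
    rw [← Finset.sum_add_distrib]
    congr 1; ext j; push_cast [Pi.add_apply]; ring
  rw [this]
  push_cast
  ring

theorem star_ek (m : Fin d → ℤ) (k : Fin d → ℝ) :
    star (ek m k) = ek (-m) k := by
  rw [Complex.star_def, ek, ek, ← Complex.exp_conj]
  congr 1
  have : (∑ j, (((-m) j : ℤ) : ℝ) * k j) = -(∑ j, (m j : ℝ) * k j) := by
    rw [← Finset.sum_neg_distrib]
    congr 1; ext j; push_cast [Pi.neg_apply]; ring
  rw [this, Complex.ofReal_neg, _root_.map_mul, Complex.conj_I, Complex.conj_ofReal]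
  ring

theorem ek_sub (m m' : Fin d → ℤ) (k : Fin d → ℝ) :
    ek (m - m') k = ek m k * ek (-m') k := by
  rw [sub_eq_add_neg, ek_add]

noncomputable def chi (m : Fin d → ℤ) : Multiplicative (Fin d → ℝ) →* ℂ where
  toFun k := ek m (Multiplicative.toAdd k)
  map_one' := by simp [ek]
  map_mul' x y := by
    show ek m (Multiplicative.toAdd x + Multiplicative.toAdd y) = _
    unfold ek
    rw [← Complex.exp_add]
    congr 1
    have : (∑ j, (m j : ℝ) * (Multiplicative.toAdd x + Multiplicative.toAdd y) j)
        = (∑ j, (m j : ℝ) * Multiplicative.toAdd x j) + (∑ j, (m j : ℝ) * Multiplicative.toAdd y j) := by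
      rw [← Finset.sum_add_distrib]; congr 1; ext j; simp [Pi.add_apply]; ring
    rw [this]; push_cast; ring

theorem chi_injective : Function.Injective (chi (d := d)) := by
  intro m m' hmm
  funext j
  by_contra hne
  have key : ∀ t : ℝ, Complex.exp (Complex.I * ((m j : ℝ) * t : ℝ)) =
      Complex.exp (Complex.I * ((m' j : ℝ) * t : ℝ)) := by
    intro t
    have := DFunLike.congr_fun hmm
      (Multiplicative.ofAdd (fun j' => if j' = j then t else 0))
    simp only [chi, MonoidHom.coe_mk, OneHom.coe_mk] at this
    have hsum : ∀ n : Fin d → ℤ, (∑ j', (n j' : ℝ) *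
        (Multiplicative.toAdd (Multiplicative.ofAdd (fun j' => if j' = j then t else 0))) j')
        = (n j : ℝ) * t := by
      intro n
      rw [Finset.sum_eq_single j]
      · simp
      · intro b _ hb; simp [hb]
      · simp
    rw [ek, ek, hsum m, hsum m'] at this
    exact this
  set a : ℝ := ((m j : ℝ) - (m' j : ℝ)) with ha
  have hane : a ≠ 0 := by
    simp only [ha, sub_ne_zero]
    exact_mod_cast fun h => hne (by exact_mod_cast h)
  have := key (Real.pi / a)
  have hx : (m j : ℝ) * (Real.pi / a) = (m' j : ℝ) * (Real.pi / a) + Real.pi := by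
    field_simp
    ring
  rw [hx] at this
  have : Complex.exp (Complex.I * ((m' j : ℝ) * (Real.pi / a) + Real.pi : ℝ)) =
      Complex.exp (Complex.I * ((m' j : ℝ) * (Real.pi / a) : ℝ)) := this
  rw [Complex.ofReal_add, mul_add, Complex.exp_add] at this
  have hpi : Complex.exp (Complex.I * (Real.pi : ℂ)) = -1 := by
    rw [mul_comm]; exact Complex.exp_pi_mul_I
  rw [hpi] at this
  have h2 : Complex.exp (Complex.I * ((m' j : ℝ) * (Real.pi / a) : ℝ)) * (-1)
      = Complex.exp (Complex.I * ((m' j : ℝ) * (Real.pi / a) : ℝ)) * 1 := by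
    rw [mul_one]; exact this
  have := mul_left_cancel₀ (Complex.exp_ne_zero _) h2
  norm_num at this

theorem indep {T : Finset (Fin d → ℤ)} {c : (Fin d → ℤ) → ℂ}
    (h : ∀ k : Fin d → ℝ, ∑ m ∈ T, c m * ek m k = 0) : ∀ m ∈ T, c m = 0 := by
  have li : LinearIndependent ℂ (fun m : Fin d → ℤ => ((chi m : Multiplicative (Fin d → ℝ) →* ℂ) :
      Multiplicative (Fin d → ℝ) → ℂ)) := by
    exact (linearIndependent_monoidHom (Multiplicative (Fin d → ℝ)) ℂ).comp chi chi_injective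
  refine linearIndependent_iff'.mp li T c ?_
  funext k
  have := h (Multiplicative.toAdd k)
  simpa [chi, Finset.sum_apply, smul_eq_mul] using this

theorem mindep {T : Finset (Fin d → ℤ)} {C : (Fin d → ℤ) → Matrix (Fin s) (Fin s) ℂ}
    (h : ∀ k : Fin d → ℝ, ∑ m ∈ T, ek m k • C m = 0) : ∀ m ∈ T, C m = 0 := by
  intro m hm
  ext i j
  have := indep (T := T) (c := fun m => C m i j) (fun k => by
    have h1 := congrFun (congrFun (h k) i) j
    simpa [Finset.sum_apply, Matrix.sum_apply, mul_comm] using h1) m hm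
  simpa using this

theorem regroup (S : Finset (Fin d → ℤ))
    (f : (Fin d → ℤ) × (Fin d → ℤ) → Matrix (Fin s) (Fin s) ℂ) (k : Fin d → ℝ) :
    ∑ p ∈ S ×ˢ S, ek (p.1 - p.2) k • f p
      = ∑ m ∈ (S ×ˢ S).image (fun p => p.1 - p.2),
          ek m k • ∑ p ∈ (S ×ˢ S).filter (fun p => p.1 - p.2 = m), f p := by
  rw [← Finset.sum_fiberwise_of_maps_to (g := fun p => p.1 - p.2)
    (fun p hp => Finset.mem_image_of_mem _ hp)]
  refine Finset.sum_congr rfl fun m hm => ?_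
  rw [Finset.smul_sum]
  refine Finset.sum_congr rfl fun p hp => ?_
  rw [(Finset.mem_filter.mp hp).2]

theorem expand (S : Finset (Fin d → ℤ)) (A : (Fin d → ℤ) → Matrix (Fin s) (Fin s) ℂ)
    (k : Fin d → ℝ) :
    (∑ h ∈ S, ek h k • A h) * (∑ h ∈ S, ek h k • A h)ᴴ
      = ∑ p ∈ S ×ˢ S, ek (p.1 - p.2) k • (A p.1 * (A p.2)ᴴ) := by
  rw [conjTranspose_sum, Finset.sum_mul_sum, Finset.sum_product]
  refine Finset.sum_congr rfl fun h _ => Finset.sum_congr rfl fun h' _ => ?_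
  rw [conjTranspose_smul, smul_mul_smul_comm, ek_sub, star_ek]

theorem expand' (S : Finset (Fin d → ℤ)) (A : (Fin d → ℤ) → Matrix (Fin s) (Fin s) ℂ)
    (k : Fin d → ℝ) :
    (∑ h ∈ S, ek h k • A h)ᴴ * (∑ h ∈ S, ek h k • A h)
      = ∑ p ∈ S ×ˢ S, ek (p.1 - p.2) k • ((A p.2)ᴴ * A p.1) := by
  rw [conjTranspose_sum, Finset.sum_mul_sum, Finset.sum_product, Finset.sum_comm]
  refine Finset.sum_congr rfl fun h _ => Finset.sum_congr rfl fun h' _ => ?_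
  rw [conjTranspose_smul, smul_mul_smul_comm, ek_sub, star_ek, mul_comm]

theorem one_ne_zero' (hs : 1 ≤ s) : (1 : Matrix (Fin s) (Fin s) ℂ) ≠ 0 := by
  intro h
  have := congrFun (congrFun h ⟨0, hs⟩) ⟨0, hs⟩
  simp [Matrix.one_apply] at this

theorem key (hs : 1 ≤ s) (S : Finset (Fin d → ℤ))
    (f : (Fin d → ℤ) × (Fin d → ℤ) → Matrix (Fin s) (Fin s) ℂ) :
    (∀ k : Fin d → ℝ, ∑ p ∈ S ×ˢ S, ek (p.1 - p.2) k • f p = 1)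
    ↔ ((∑ p ∈ (S ×ˢ S).filter (fun p => p.1 - p.2 = 0), f p = 1) ∧
       ∀ m : Fin d → ℤ, m ≠ 0 → ∑ p ∈ (S ×ˢ S).filter (fun p => p.1 - p.2 = m), f p = 0) := by
  classical
  set T : Finset (Fin d → ℤ) := (S ×ˢ S).image (fun p => p.1 - p.2) with hT
  set B : (Fin d → ℤ) → Matrix (Fin s) (Fin s) ℂ :=
    fun m => ∑ p ∈ (S ×ˢ S).filter (fun p => p.1 - p.2 = m), f p with hB
  have hBnot : ∀ m ∉ T, B m = 0 := by
    intro m hm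
    rw [hB]
    refine Finset.sum_eq_zero fun p hp => ?_
    exact absurd (Finset.mem_image.mpr ⟨p, (Finset.mem_filter.mp hp).1,
      (Finset.mem_filter.mp hp).2⟩) hm
  constructor
  · intro h
    have h' : ∀ k : Fin d → ℝ, ∑ m ∈ T, ek m k • B m = 1 := fun k => by
      rw [← regroup]; exact h k
    set C : (Fin d → ℤ) → Matrix (Fin s) (Fin s) ℂ :=
      fun m => B m - (if m = 0 then 1 else 0) with hC
    have hzero : ∀ k : Fin d → ℝ, ∑ m ∈ insert 0 T, ek m k • C m = 0 := by
      intro k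
      have e1 : ∑ m ∈ insert 0 T, ek m k • C m
          = (∑ m ∈ insert 0 T, ek m k • B m) - ∑ m ∈ insert 0 T, ek m k • (if m = 0 then (1 : Matrix (Fin s) (Fin s) ℂ) else 0) := by
        rw [← Finset.sum_sub_distrib]
        refine Finset.sum_congr rfl fun m _ => ?_
        rw [hC, smul_sub]
      have e2 : ∑ m ∈ insert 0 T, ek m k • B m = 1 := by
        rw [Finset.sum_insert_of_eq_zero_if_notMem (fun hnot => by rw [hBnot 0 hnot, smul_zero])]
        exact h' k
      have e3 : ∑ m ∈ insert 0 T, ek m k • (if m = 0 then (1 : Matrix (Fin s) (Fin s) ℂ) else 0) = 1 := by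
        rw [Finset.sum_congr rfl (fun m _ => by
          show ek m k • (if m = 0 then (1 : Matrix (Fin s) (Fin s) ℂ) else 0)
            = if m = 0 then ek m k • (1 : Matrix (Fin s) (Fin s) ℂ) else 0
          split <;> simp)]
        rw [Finset.sum_ite_eq' (insert 0 T) 0 (fun m => ek m k • (1 : Matrix (Fin s) (Fin s) ℂ))]
        simp [ek_zero]
      rw [e1, e2, e3, sub_self]
    have hCzero := mindep hzero
    have hB0 : B 0 = 1 := by
      have := hCzero 0 (Finset.mem_insert_self 0 _)
      rw [hC] at this
      simpa [sub_eq_zero] using this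
    refine ⟨hB0, fun m hm => ?_⟩
    by_cases hmT : m ∈ T
    · have := hCzero m (Finset.mem_insert_of_mem hmT)
      rw [hC] at this
      simpa [hm, sub_eq_zero] using this
    · exact hBnot m hmT
  · rintro ⟨h0, hoff⟩ k
    rw [regroup]
    have h0T : (0 : Fin d → ℤ) ∈ T := by
      have hne : ((S ×ˢ S).filter (fun p => p.1 - p.2 = 0)).Nonempty := by
        rw [Finset.nonempty_iff_ne_empty]
        intro hemp
        rw [hemp, Finset.sum_empty] at h0
        exact one_ne_zero' hs h0.symm
      obtain ⟨p, hp⟩ := hne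
      exact Finset.mem_image.mpr ⟨p, (Finset.mem_filter.mp hp).1, (Finset.mem_filter.mp hp).2⟩
    rw [Finset.sum_congr rfl (fun m _ =>
      show ek m k • (∑ p ∈ (S ×ˢ S).filter (fun p => p.1 - p.2 = m), f p)
          = if m = 0 then (1 : Matrix (Fin s) (Fin s) ℂ) else 0 from by
        by_cases hm0 : m = 0
        · rw [if_pos hm0, hm0, ek_zero, one_smul]; exact h0
        · rw [if_neg hm0, hoff m hm0, smul_zero])]
    rw [Finset.sum_ite_eq' T 0 (fun _ => (1 : Matrix (Fin s) (Fin s) ℂ)), if_pos h0T]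

theorem diagSum (S : Finset (Fin d → ℤ)) (g : (Fin d → ℤ) → (Fin d → ℤ) → Matrix (Fin s) (Fin s) ℂ) :
    ∑ p ∈ (S ×ˢ S).filter (fun p => p.1 - p.2 = 0), g p.1 p.2 = ∑ h ∈ S, g h h := by
  refine Finset.sum_nbij' (fun p => p.1) (fun h => (h, h)) ?_ ?_ ?_ ?_ ?_
  · intro p hp
    exact (Finset.mem_product.mp (Finset.mem_filter.mp hp).1).1
  · intro h hh
    exact Finset.mem_filter.mpr ⟨Finset.mem_product.mpr ⟨hh, hh⟩, sub_self _⟩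
  · intro p hp
    have := sub_eq_zero.mp (Finset.mem_filter.mp hp).2
    exact Prod.ext rfl this
  · intro h hh; rfl
  · intro p hp
    have := sub_eq_zero.mp (Finset.mem_filter.mp hp).2
    exact show g p.1 p.2 = g p.1 p.1 from congrArg (g p.1) this.symm

end WalkAux

open WalkAux

/-- The symbol `A_k = Σ_{h ∈ S} e^{i h·k} A_h` of a translation-invariant quantum walk on
`ℤ^d` is unitary for every `k ∈ ℝ^d` if and only if the normalization conditions
`Σ_h A_h A_hᴴ = Σ_h A_hᴴ A_h = 1` and, for every nonzero `m ∈ ℤ^d`, the off-diagonal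
conditions `Σ_{h−h'=m} A_h A_{h'}ᴴ = 0` and `Σ_{h−h'=m} A_{h'}ᴴ A_h = 0` hold. -/
theorem walk_symbol_unitary_iff {d s : ℕ} (hd : 1 ≤ d) (hs : 1 ≤ s)
    (S : Finset (Fin d → ℤ)) (A : (Fin d → ℤ) → Matrix (Fin s) (Fin s) ℂ) :
    (∀ k : Fin d → ℝ,
      (∑ h ∈ S, Complex.exp (Complex.I * ((∑ j, (h j : ℝ) * k j : ℝ) : ℂ)) • A h)
        ∈ Matrix.unitaryGroup (Fin s) ℂ)
    ↔ ((∑ h ∈ S, A h * (A h)ᴴ = 1) ∧ (∑ h ∈ S, (A h)ᴴ * A h = 1)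
        ∧ ∀ m : Fin d → ℤ, m ≠ 0 →
          (∑ p ∈ (S ×ˢ S).filter fun p => p.1 - p.2 = m, A p.1 * (A p.2)ᴴ = 0)
            ∧ (∑ p ∈ (S ×ˢ S).filter fun p => p.1 - p.2 = m, (A p.2)ᴴ * A p.1 = 0)) := by
  classical
  have hE : ∀ k : Fin d → ℝ,
      (∑ h ∈ S, Complex.exp (Complex.I * ((∑ j, (h j : ℝ) * k j : ℝ) : ℂ)) • A h)
        = ∑ h ∈ S, ek h k • A h := fun k => rfl
  constructor
  · intro h
    have h1 : ∀ k : Fin d → ℝ,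
        ∑ p ∈ S ×ˢ S, ek (p.1 - p.2) k • (A p.1 * (A p.2)ᴴ) = 1 := by
      intro k
      rw [← expand]
      have := Matrix.mem_unitaryGroup_iff.mp (h k)
      rwa [Matrix.star_eq_conjTranspose, hE k] at this
    have h2 : ∀ k : Fin d → ℝ,
        ∑ p ∈ S ×ˢ S, ek (p.1 - p.2) k • ((A p.2)ᴴ * A p.1) = 1 := by
      intro k
      rw [← expand']
      have := Matrix.mem_unitaryGroup_iff'.mp (h k)
      rwa [Matrix.star_eq_conjTranspose, hE k] at this
    obtain ⟨c1, o1⟩ := (key hs S (fun p => A p.1 * (A p.2)ᴴ)).mp h1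
    obtain ⟨c2, o2⟩ := (key hs S (fun p => (A p.2)ᴴ * A p.1)).mp h2
    exact ⟨by rw [← diagSum S (fun a b => A a * (A b)ᴴ)]; exact c1,
      by rw [← diagSum S (fun a b => (A b)ᴴ * A a)]; exact c2,
      fun m hm => ⟨o1 m hm, o2 m hm⟩⟩
  · rintro ⟨c1, c2, hoff⟩ k
    have m1 : (∑ h ∈ S, ek h k • A h) * star (∑ h ∈ S, ek h k • A h) = 1 := by
      rw [Matrix.star_eq_conjTranspose, expand]
      exact (key hs S (fun p => A p.1 * (A p.2)ᴴ)).mpr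
        ⟨by rw [diagSum S (fun a b => A a * (A b)ᴴ)]; exact c1, fun m hm => (hoff m hm).1⟩ k
    rw [hE k]
    exact Matrix.mem_unitaryGroup_iff.mpr m1
end

section
/- Let X and Y be nonzero 2×2 complex matrices with X · Yᴴ = 0 and Xᴴ · Y = 0. Then there exist a unitary 2×2 matrix V, positive reals α and β, and vectors η₊, η₋ ∈ ℂ² forming an orthonormal basis (⟨η₊,η₊⟩ = ⟨η₋,η₋⟩ = 1, ⟨η₊,η₋⟩ = 0) such that X = α • (V · (η₊ η₊ᴴ)) and Y = β • (V · (η₋ η₋ᴴ)), where η ηᴴ denotes the rank-one matrix vecMulVec η (star η). -/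
/-!
Since `X Yᴴ = 0` and `Y ≠ 0`, `X` annihilates a unit vector `u`. Expanding `X = X (u uᴴ + p pᴴ)`
along the orthonormal basis `u, p = u⊥` gives `X = ξ pᴴ`. Then `Y Xᴴ = 0` forces `Y p = 0`, so in
the same way `Y = ζ qᴴ` with `q = p⊥`, and `Xᴴ Y = 0` forces `ξ ⊥ ζ`. Writing `ξ = α e` and
`ζ = β f` with `e, f` unit vectors, `V = e pᴴ + f qᴴ` sends the orthonormal basis `p, q` to the
orthonormal pair `e, f`, so it is unitary, and `V p pᴴ = e pᴴ`, `V q qᴴ = f qᴴ`.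
-/

open Matrix

namespace Matrix

section OrthVec

variable {R : Type*} [CommRing R] [StarRing R]

def orthVec (u : Fin 2 → R) : Fin 2 → R := ![-star (u 1), star (u 0)]

lemma star_dotProduct_orthVec (u : Fin 2 → R) : star u ⬝ᵥ orthVec u = 0 := by
  simp [orthVec, dotProduct, Fin.sum_univ_two, mul_comm]

lemma star_orthVec_dotProduct (u : Fin 2 → R) : star (orthVec u) ⬝ᵥ u = 0 := by
  rw [star_dotProduct, star_dotProduct_orthVec, star_zero]

lemma star_orthVec_dotProduct_orthVec (u : Fin 2 → R) :
    star (orthVec u) ⬝ᵥ orthVec u = star u ⬝ᵥ u := by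
  simp [orthVec, dotProduct, Fin.sum_univ_two, mul_comm, add_comm]

lemma vecMulVec_add_vecMulVec_orthVec {u : Fin 2 → R} (hu : star u ⬝ᵥ u = 1) :
    vecMulVec u (star u) + vecMulVec (orthVec u) (star (orthVec u)) = 1 := by
  simp only [dotProduct, Fin.sum_univ_two, Pi.star_apply] at hu
  ext i j
  rw [add_apply, vecMulVec_apply, vecMulVec_apply]
  revert i j
  simp only [Fin.forall_fin_two, orthVec, Pi.star_apply, cons_val_zero, cons_val_one,
    cons_val_fin_one, star_neg, star_star, mul_comm, neg_mul, mul_neg, neg_neg, one_apply_eq,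
    add_neg_cancel, ne_eq, zero_ne_one, one_ne_zero, not_false_eq_true, one_apply_ne, and_true,
    true_and]
  constructor <;> linear_combination hu

lemma eq_vecMulVec_orthVec_of_mulVec_eq_zero {m : Type*} {M : Matrix m (Fin 2) R}
    {u : Fin 2 → R} (hu : star u ⬝ᵥ u = 1) (hMu : M *ᵥ u = 0) :
    M = vecMulVec (M *ᵥ orthVec u) (star (orthVec u)) := by
  calc M = M * (vecMulVec u (star u) + vecMulVec (orthVec u) (star (orthVec u))) := by
        rw [vecMulVec_add_vecMulVec_orthVec hu, Matrix.mul_one]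
    _ = vecMulVec (M *ᵥ orthVec u) (star (orthVec u)) := by
        rw [Matrix.mul_add, mul_vecMulVec, mul_vecMulVec, hMu, zero_vecMulVec, zero_add]

end OrthVec

lemma vecMulVec_add_vecMulVec_mem_unitaryGroup {n R : Type*} [Fintype n] [DecidableEq n]
    [CommRing R] [StarRing R] {e f p q : n → R} (he : star e ⬝ᵥ e = 1)
    (hf : star f ⬝ᵥ f = 1) (hef : star e ⬝ᵥ f = 0)
    (hpq : vecMulVec p (star p) + vecMulVec q (star q) = 1) :
    vecMulVec e (star p) + vecMulVec f (star q) ∈ unitaryGroup n R := by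
  have hfe : star f ⬝ᵥ e = 0 := by rw [star_dotProduct, hef, star_zero]
  rw [mem_unitaryGroup_iff', star_eq_conjTranspose, conjTranspose_add, conjTranspose_vecMulVec,
    conjTranspose_vecMulVec, star_star, star_star, Matrix.add_mul, Matrix.mul_add,
    Matrix.mul_add]
  simp only [vecMulVec_mul_vecMulVec, he, hf, hef, hfe, one_smul, zero_smul, vecMulVec_zero,
    add_zero, zero_add, hpq]

lemma exists_eq_pos_smul_unit {n 𝕜 : Type*} [Fintype n] [RCLike 𝕜]
    {v : n → 𝕜} (hv : v ≠ 0) :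
    ∃ (r : ℝ) (u : n → 𝕜), 0 < r ∧ star u ⬝ᵥ u = 1 ∧ v = (r : 𝕜) • u := by
  set x : EuclideanSpace 𝕜 n := WithLp.toLp 2 v
  have hx : x ≠ 0 := by simpa [x] using hv
  refine ⟨‖x‖, (‖x‖⁻¹ : 𝕜) • v, norm_pos_iff.mpr hx, ?_, ?_⟩
  · rw [dotProduct_comm, ← EuclideanSpace.inner_toLp_toLp, inner_self_eq_norm_sq_to_K,
      WithLp.toLp_smul, norm_smul_inv_norm hx]
    simp
  · have : (‖x‖ : 𝕜) ≠ 0 := by simpa using hx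
    rw [smul_smul, mul_inv_cancel₀ this, one_smul]

lemma exists_eq_vecMulVec_of_mul_conjTranspose_eq_zero {m l 𝕜 : Type*} [Fintype l] [RCLike 𝕜]
    {X : Matrix m (Fin 2) 𝕜} {Y : Matrix l (Fin 2) 𝕜} (hX : X ≠ 0) (hY : Y ≠ 0)
    (h : X * Yᴴ = 0) :
    ∃ (p : Fin 2 → 𝕜) (ξ : m → 𝕜) (ζ : l → 𝕜), star p ⬝ᵥ p = 1 ∧ ξ ≠ 0 ∧ ζ ≠ 0 ∧
      X = vecMulVec ξ (star p) ∧ Y = vecMulVec ζ (star (orthVec p)) := by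
  obtain ⟨v, hv⟩ : ∃ v, Yᴴ *ᵥ v ≠ 0 := by
    by_contra! hYv
    exact hY (conjTranspose_eq_zero.mp (ext_iff_mulVec.mpr fun v => by simp [hYv v]))
  obtain ⟨r, u, hr, hu, hru⟩ := exists_eq_pos_smul_unit hv
  have hXu : X *ᵥ u = 0 := by
    have hXYv : X *ᵥ (Yᴴ *ᵥ v) = 0 := by rw [mulVec_mulVec, h, zero_mulVec]
    rw [hru, mulVec_smul, smul_eq_zero] at hXYv
    exact hXYv.resolve_left (by exact_mod_cast hr.ne')
  set p := orthVec u
  have hp : star p ⬝ᵥ p = 1 := by rw [star_orthVec_dotProduct_orthVec, hu]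
  obtain ⟨ξ, rfl⟩ : ∃ ξ, X = vecMulVec ξ (star p) :=
    ⟨_, eq_vecMulVec_orthVec_of_mulVec_eq_zero hu hXu⟩
  have hξ : ξ ≠ 0 := by rintro rfl; simp at hX
  have hYp : Y *ᵥ p = 0 := by
    have hYX : Y * (vecMulVec ξ (star p))ᴴ = 0 := by
      rw [← conjTranspose_conjTranspose Y, ← conjTranspose_mul, h, conjTranspose_zero]
    rw [conjTranspose_vecMulVec, star_star, mul_vecMulVec] at hYX
    by_contra hYp
    obtain ⟨i, hi⟩ := Function.ne_iff.mp hYp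
    obtain ⟨j, hj⟩ := Function.ne_iff.mp (star_ne_zero.mpr hξ)
    exact mul_ne_zero hi hj congr($hYX i j)
  obtain ⟨ζ, rfl⟩ : ∃ ζ, Y = vecMulVec ζ (star (orthVec p)) :=
    ⟨_, eq_vecMulVec_orthVec_of_mulVec_eq_zero hp hYp⟩
  have hζ : ζ ≠ 0 := by rintro rfl; simp at hY
  exact ⟨p, ξ, ζ, hp, hξ, hζ, rfl, rfl⟩

end Matrix

/-- Common polar decomposition of a pair of transition matrices: if `X, Y` are nonzero
`2×2` complex matrices with `X Yᴴ = 0` and `Xᴴ Y = 0`, then there are a unitary `V`,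
positive reals `α, β` and an orthonormal basis `η₊, η₋` of `ℂ²` with
`X = α V |η₊⟩⟨η₊|` and `Y = β V |η₋⟩⟨η₋|`. -/
theorem common_polar_decomposition (X Y : Matrix (Fin 2) (Fin 2) ℂ)
    (hX : X ≠ 0) (hY : Y ≠ 0) (h1 : X * Yᴴ = 0) (h2 : Xᴴ * Y = 0) :
    ∃ (V : Matrix (Fin 2) (Fin 2) ℂ) (α β : ℝ) (ηp ηm : Fin 2 → ℂ),
      V ∈ Matrix.unitaryGroup (Fin 2) ℂ ∧ 0 < α ∧ 0 < β
        ∧ star ηp ⬝ᵥ ηp = 1 ∧ star ηm ⬝ᵥ ηm = 1 ∧ star ηp ⬝ᵥ ηm = 0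
        ∧ X = (α : ℂ) • (V * vecMulVec ηp (star ηp))
        ∧ Y = (β : ℂ) • (V * vecMulVec ηm (star ηm)) := by
  obtain ⟨p, ξ, ζ, hp, hξ, hζ, rfl, rfl⟩ :=
    exists_eq_vecMulVec_of_mul_conjTranspose_eq_zero hX hY h1
  have hq : star (orthVec p) ⬝ᵥ orthVec p = 1 := by rw [star_orthVec_dotProduct_orthVec, hp]
  have hξζ : star ξ ⬝ᵥ ζ = 0 := by
    rw [conjTranspose_vecMulVec, star_star, vecMulVec_mul_vecMulVec, vecMulVec_eq_zero,
      smul_eq_zero, star_eq_zero] at h2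
    rcases h2 with rfl | h | h
    · simp at hp
    · exact h
    · simp [h] at hq
  obtain ⟨α, e, hα, he, rfl⟩ := exists_eq_pos_smul_unit hξ
  obtain ⟨β, f, hβ, hf, rfl⟩ := exists_eq_pos_smul_unit hζ
  have hef : star e ⬝ᵥ f = 0 := by
    simp only [star_smul, smul_dotProduct, dotProduct_smul, smul_eq_zero] at hξζ
    exact (hξζ.resolve_left (by simpa using hβ.ne')).resolve_left (by simpa using hα.ne')
  refine ⟨vecMulVec e (star p) + vecMulVec f (star (orthVec p)), α, β, p, orthVec p,
    vecMulVec_add_vecMulVec_mem_unitaryGroup he hf hef (vecMulVec_add_vecMulVec_orthVec hp),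
    hα, hβ, hp, hq, star_dotProduct_orthVec p, ?_, ?_⟩
  all_goals
    rw [smul_vecMulVec]
    congr 1
    simp only [Matrix.add_mul, vecMulVec_mul_vecMulVec, hp, hq, star_dotProduct_orthVec,
      star_orthVec_dotProduct, one_smul, zero_smul, vecMulVec_zero, add_zero, zero_add]
end

section
/- Let U be an element of the special unitary group SU(2) (2×2 complex matrices with UᴴU = 1 and det U = 1). If there exists a nonzero vector η ∈ ℂ² with ⟨η, Uη⟩ = 0, then the trace of U is 0 and U·U = −1. -/
open Matrix

/-- If `U ∈ SU(2)` satisfies `⟨η, Uη⟩ = 0` for some nonzero `η ∈ ℂ²`, then `U` is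
traceless and `U² = −1`. -/
theorem su2_traceless_of_orthogonal_vector
    (U : Matrix.specialUnitaryGroup (Fin 2) ℂ) (η : Fin 2 → ℂ) (hη : η ≠ 0)
    (h : star η ⬝ᵥ ((U : Matrix (Fin 2) (Fin 2) ℂ) *ᵥ η) = 0) :
    Matrix.trace (U : Matrix (Fin 2) (Fin 2) ℂ) = 0
      ∧ (U : Matrix (Fin 2) (Fin 2) ℂ) * (U : Matrix (Fin 2) (Fin 2) ℂ) = -1 := by
  set M : Matrix (Fin 2) (Fin 2) ℂ := (U : Matrix (Fin 2) (Fin 2) ℂ) with hM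
  obtain ⟨huni, hdet⟩ := (Matrix.mem_specialUnitaryGroup_iff).mp U.2
  have huni' : M * star M = 1 := (Matrix.mem_unitaryGroup_iff).mp huni
  have hadj : star M = M.adjugate := by
    calc star M = (M.adjugate * M) * star M := by
          rw [Matrix.adjugate_mul, hdet, one_smul, one_mul]
      _ = M.adjugate * (M * star M) := by rw [mul_assoc]
      _ = M.adjugate := by rw [huni', mul_one]
  -- entries
  set a := M 0 0; set b := M 0 1; set c := M 1 0; set d := M 1 1
  have hMeq : M = !![a, b; c, d] := by
    ext i j; fin_cases i <;> fin_cases j <;> rfl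
  have hadj2 : M.adjugate = !![d, -b; -c, a] := by
    rw [hMeq, Matrix.adjugate_fin_two]
    simp
  have hd : (starRingEnd ℂ) a = d := by
    have := congrFun (congrFun hadj 0) 0
    simpa [hadj2, Matrix.star_apply] using this
  have hc : (starRingEnd ℂ) b = -c := by
    have := congrFun (congrFun hadj 1) 0
    simpa [hadj2, Matrix.star_apply] using this
  have hdet' : a * d - b * c = 1 := by
    simp only [← hM] at hdet
    rw [hMeq] at hdet; simpa [Matrix.det_fin_two] using hdet
  set x := η 0; set y := η 1
  have hx : (starRingEnd ℂ) x * (a * x + b * y) + (starRingEnd ℂ) y * (c * x + d * y) = 0 := by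
    simpa [dotProduct, Matrix.mulVec, Fin.sum_univ_two, mul_comm] using h
  have hre : a.re = 0 := by
    have hre0 := congrArg Complex.re hx
    have hnorm : Complex.normSq x + Complex.normSq y > 0 := by
      rcases (show x ≠ 0 ∨ y ≠ 0 by
        by_contra hcon
        push_neg at hcon
        apply hη
        funext i; fin_cases i
        · exact hcon.1
        · exact hcon.2) with h1 | h1
      · have := Complex.normSq_pos.mpr h1
        nlinarith [Complex.normSq_nonneg y]
      · have := Complex.normSq_pos.mpr h1
        nlinarith [Complex.normSq_nonneg x]
    rw [← hd] at hx
    have hc' : c = -((starRingEnd ℂ) b) := by rw [hc]; ring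
    rw [hc'] at hx
    have hre0 := congrArg Complex.re hx
    simp [Complex.add_re, Complex.mul_re, Complex.conj_re, Complex.conj_im] at hre0
    have : a.re * (Complex.normSq x + Complex.normSq y) = 0 := by
      simp only [Complex.normSq_apply]; linear_combination hre0
    have := mul_eq_zero.mp this
    rcases this with h2 | h2
    · exact h2
    · exact absurd h2 (ne_of_gt hnorm)
  have hconj : (starRingEnd ℂ) a = -a := by
    apply Complex.ext <;> simp [hre]
  have hda : d = -a := by rw [← hd, hconj]
  have htr : Matrix.trace M = 0 := by
    rw [hMeq]; simp [Matrix.trace_fin_two, hda]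
  refine ⟨htr, ?_⟩
  have hbc : -(a * a) - b * c = 1 := by rw [hda] at hdet'; linear_combination hdet'
  rw [hMeq]
  ext i j
  fin_cases i <;> fin_cases j <;>
    simp [Matrix.mul_apply, Fin.sum_univ_two, hda, Matrix.one_apply] <;>
    ring_nf <;> linear_combination -hbc
end

section
/- Let G be a subgroup of the special unitary group SU(2) such that every element U of G whose underlying matrix is neither 1 nor −1 has trace 0. Then the cardinality of G is at most 8 (so its image in SU(2)/{±1} has order at most 4). -/
/-!
By Cayley–Hamilton a 2 × 2 matrix of determinant 1 and trace 0 squares to -1, so every element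
of `G` other than `±1` squares to `z = -1`. In a group where every element outside `{1, z}`
squares to `z`, the relation `(ab)² = b²` forces `ba = a⁻¹b`. Given such `U` and `V` with
`V ≠ U^{±1}`, an element `x` outside `{1, z, U^{±1}, V^{±1}, (UV)^{±1}}` would satisfy this
relation against `U`, `V` and `UV`; this makes `U` and `V` commute, and then `(UV)² = V²` gives
`U² = 1`, i.e. `z = 1`.
-/

section QuaternionLike

variable {M : Type*} [Group M]

theorem mul_eq_inv_mul_of_mul_mul_self_eq {a b : M} (h : a * b * (a * b) = b * b) :
    b * a = a⁻¹ * b :=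
  eq_inv_mul_of_mul_eq <| mul_right_cancel (b := b) <| by rw [← h]; group

theorem eq_one_of_common_mul_self {x U V z : M} (hx : x * x = z) (hU : U * U = z)
    (hV : V * V = z) (hUV : U * V * (U * V) = z) (hUx : U * x * (U * x) = z)
    (hVx : V * x * (V * x) = z) (hUVx : U * V * x * (U * V * x) = z) : z = 1 := by
  have hxU := mul_eq_inv_mul_of_mul_mul_self_eq (hUx.trans hx.symm)
  have hxV := mul_eq_inv_mul_of_mul_mul_self_eq (hVx.trans hx.symm)
  have hxUV := mul_eq_inv_mul_of_mul_mul_self_eq (hUVx.trans hx.symm)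
  have hcomm : V * U = U * V := by
    refine inv_injective (mul_right_cancel (b := x) ?_)
    calc (V * U)⁻¹ * x = U⁻¹ * (V⁻¹ * x) := by group
      _ = x * (U * V) := by rw [← hxV, ← mul_assoc, ← hxU, mul_assoc]
      _ = (U * V)⁻¹ * x := hxUV
  have hVU := mul_eq_inv_mul_of_mul_mul_self_eq (hUV.trans hV.symm)
  rw [hcomm, mul_left_inj, eq_inv_iff_mul_eq_one] at hVU
  rw [← hU, hVU]

theorem Subgroup.exists_forall_mem_list_of_mul_self_eq (H : Subgroup M) {z : M} (hz : z ≠ 1)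
    (hsq : ∀ g ∈ H, g ≠ 1 → g ≠ z → g * g = z) :
    ∃ U V : M, ∀ g ∈ H, g ∈ [1, z, U, U⁻¹, V, V⁻¹, U * V, (U * V)⁻¹] := by
  have hsq_mul : ∀ a ∈ H, ∀ b ∈ H, b * b = z → b ≠ a⁻¹ → a ≠ b → a * b * (a * b) = z :=
    fun a ha b hb hbb hba hab => hsq _ (H.mul_mem ha hb) (mt mul_eq_one_iff_inv_eq.mp hba.symm)
      (hbb ▸ (mul_left_injective b).ne hab)
  by_cases hU : ∃ U ∈ H, U ≠ 1 ∧ U ≠ z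
  swap
  · push Not at hU
    refine ⟨1, 1, fun g hg => ?_⟩
    by_contra hg'
    simp only [inv_one, mul_one, List.mem_cons, List.not_mem_nil, not_or] at hg'
    exact hg'.2.1 (hU g hg hg'.1)
  obtain ⟨U, hUH, hU1, hUz⟩ := hU
  by_cases hV : ∃ V ∈ H, V ≠ 1 ∧ V ≠ z ∧ V ≠ U ∧ V ≠ U⁻¹
  swap
  · push Not at hV
    refine ⟨U, 1, fun g hg => ?_⟩
    by_contra hg'
    simp only [inv_one, mul_one, List.mem_cons, List.not_mem_nil, not_or] at hg'
    exact hg'.2.2.2.1 (hV g hg hg'.1 hg'.2.1 hg'.2.2.1)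
  obtain ⟨V, hVH, hV1, hVz, hVU, hVU'⟩ := hV
  refine ⟨U, V, fun x hxH => ?_⟩
  by_contra hx
  simp only [List.mem_cons, List.not_mem_nil, not_or] at hx
  obtain ⟨hx1, hxz, hxU, hxU', hxV, hxV', hxUV, hxUV', -⟩ := hx
  have hUU := hsq U hUH hU1 hUz
  have hVV := hsq V hVH hV1 hVz
  have hxx := hsq x hxH hx1 hxz
  exact hz <| eq_one_of_common_mul_self hxx hUU hVV (hsq_mul U hUH V hVH hVV hVU' (Ne.symm hVU))
    (hsq_mul U hUH x hxH hxx hxU' (Ne.symm hxU)) (hsq_mul V hVH x hxH hxx hxV' (Ne.symm hxV))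
    (hsq_mul _ (H.mul_mem hUH hVH) x hxH hxx hxUV' (Ne.symm hxUV))

theorem Subgroup.finite_and_card_le_eight_of_mul_self_eq (H : Subgroup M) {z : M} (hz : z ≠ 1)
    (hsq : ∀ g ∈ H, g ≠ 1 → g ≠ z → g * g = z) : Finite H ∧ Nat.card H ≤ 8 := by
  classical
  obtain ⟨U, V, hmem⟩ := H.exists_forall_mem_list_of_mul_self_eq hz hsq
  set s := [1, z, U, U⁻¹, V, V⁻¹, U * V, (U * V)⁻¹].toFinset
  have hsub : (H : Set M) ⊆ s := fun g hg => List.mem_toFinset.mpr (hmem g hg)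
  have hfin : (H : Set M).Finite := s.finite_toSet.subset hsub
  refine ⟨hfin, ?_⟩
  calc Nat.card H = Nat.card (H : Set M) := rfl
    _ ≤ Nat.card (s : Set M) := Nat.card_mono s.finite_toSet hsub
    _ = s.card := Nat.card_eq_finsetCard s
    _ ≤ 8 := List.toFinset_card_le _

end QuaternionLike

theorem Matrix.mul_self_eq_neg_one_of_trace_eq_zero {R : Type*} [CommRing R] [Nontrivial R]
    (A : Matrix (Fin 2) (Fin 2) R) (hdet : A.det = 1) (htr : A.trace = 0) : A * A = -1 := by
  have h := A.aeval_self_charpoly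
  rw [A.charpoly_fin_two, htr, hdet] at h
  simpa [sq, add_eq_zero_iff_eq_neg] using h

/-- A subgroup `G` of `SU(2)` (here: a subgroup of the unitary group all of whose
elements have determinant 1) all of whose elements other than `±1` are traceless has at
most 8 elements. -/
theorem su2_subgroup_traceless_card_le_eight
    (G : Subgroup (Matrix.unitaryGroup (Fin 2) ℂ))
    (hdet : ∀ U ∈ G, ((U : Matrix (Fin 2) (Fin 2) ℂ)).det = 1)
    (hG : ∀ U ∈ G, (U : Matrix (Fin 2) (Fin 2) ℂ) ≠ 1 →
      (U : Matrix (Fin 2) (Fin 2) ℂ) ≠ -1 →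
      Matrix.trace (U : Matrix (Fin 2) (Fin 2) ℂ) = 0) :
    Finite G ∧ Nat.card G ≤ 8 := by
  have hneg_one : (-1 : Matrix.unitaryGroup (Fin 2) ℂ) ≠ 1 := fun h => by
    have := congrArg (fun U : Matrix.unitaryGroup (Fin 2) ℂ => (U : Matrix (Fin 2) (Fin 2) ℂ) 0 0) h
    norm_num [Unitary.coe_neg] at this
  refine G.finite_and_card_le_eight_of_mul_self_eq hneg_one fun U hU hU1 hU_neg => Subtype.ext ?_
  exact Matrix.mul_self_eq_neg_one_of_trace_eq_zero _ (hdet U hU)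
    (hG U hU (fun h => hU1 (Subtype.ext h)) (fun h => hU_neg (Subtype.ext h)))
end

section
/- Let V be a 2×2 complex unitary matrix and σ_Z = !![1,0; 0,−1]. Then trace(Vᴴ · σ_Z · V · σ_Z) = 0 if and only if |V₀₀|² = 1/2 (where V₀₀ is the top-left entry of V); in that case all four entries of V have absolute value 1/√2. -/
/-!
For a real diagonal `D = diag d` one has `tr (Vᴴ D V D) = ∑ dᵢ dⱼ |Vᵢⱼ|²`. The rows and columns of a
`2×2` unitary are unit vectors, so `|V₁₁|² = |V₀₀|²` and `|V₀₁|² = |V₁₀|² = 1 - |V₀₀|²`; with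
`σ_Z = diag (1, -1)` the trace therefore equals `4 |V₀₀|² - 2`, and when it vanishes every entry
has squared modulus `1/2`.
-/

open Matrix

section

variable {𝕜 n : Type*} [RCLike 𝕜] [Fintype n] [DecidableEq n]

theorem Matrix.sum_norm_sq_row_of_mem_unitaryGroup {U : Matrix n n 𝕜}
    (hU : U ∈ unitaryGroup n 𝕜) (i : n) : ∑ j, ‖U i j‖ ^ 2 = 1 := by
  have h := congrFun₂ (mem_unitaryGroup_iff.mp hU) i i
  simp only [mul_apply, star_apply, one_apply_eq, RCLike.star_def, RCLike.mul_conj] at h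
  exact_mod_cast h

theorem Matrix.sum_norm_sq_col_of_mem_unitaryGroup {U : Matrix n n 𝕜}
    (hU : U ∈ unitaryGroup n 𝕜) (j : n) : ∑ i, ‖U i j‖ ^ 2 = 1 := by
  have h := congrFun₂ (mem_unitaryGroup_iff'.mp hU) j j
  simp only [mul_apply, star_apply, one_apply_eq, RCLike.star_def, RCLike.conj_mul] at h
  exact_mod_cast h

theorem Matrix.trace_conjTranspose_mul_diagonal_mul_mul_diagonal (V : Matrix n n 𝕜)
    (d : n → ℝ) :
    trace (Vᴴ * diagonal (fun i ↦ (d i : 𝕜)) * V * diagonal (fun i ↦ (d i : 𝕜))) =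
      ((∑ j, ∑ i, d i * d j * ‖V i j‖ ^ 2 : ℝ) : 𝕜) := by
  simp only [trace, diag_apply, mul_diagonal, mul_apply (M := Vᴴ * _), mul_diagonal,
    conjTranspose_apply, Finset.sum_mul, RCLike.star_def]
  push_cast
  refine Finset.sum_congr rfl fun j _ ↦ Finset.sum_congr rfl fun i _ ↦ ?_
  rw [← RCLike.conj_mul]
  ring

theorem Matrix.norm_sq_entries_of_mem_unitaryGroup_fin_two {V : Matrix (Fin 2) (Fin 2) 𝕜}
    (hV : V ∈ unitaryGroup (Fin 2) 𝕜) :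
    ‖V 0 1‖ ^ 2 = 1 - ‖V 0 0‖ ^ 2 ∧ ‖V 1 0‖ ^ 2 = 1 - ‖V 0 0‖ ^ 2 ∧
      ‖V 1 1‖ ^ 2 = ‖V 0 0‖ ^ 2 := by
  have row₀ := sum_norm_sq_row_of_mem_unitaryGroup hV 0
  have col₀ := sum_norm_sq_col_of_mem_unitaryGroup hV 0
  have col₁ := sum_norm_sq_col_of_mem_unitaryGroup hV 1
  simp only [Fin.sum_univ_two] at row₀ col₀ col₁
  refine ⟨?_, ?_, ?_⟩ <;> linarith

theorem Matrix.trace_conjTranspose_mul_sigmaZ_mul_mul_sigmaZ_of_mem_unitaryGroup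
    {V : Matrix (Fin 2) (Fin 2) 𝕜} (hV : V ∈ unitaryGroup (Fin 2) 𝕜) :
    trace (Vᴴ * !![(1 : 𝕜), 0; 0, -1] * V * !![(1 : 𝕜), 0; 0, -1]) =
      ((4 * ‖V 0 0‖ ^ 2 - 2 : ℝ) : 𝕜) := by
  have hσ : !![(1 : 𝕜), 0; 0, -1] = diagonal (fun i ↦ ((![1, -1] i : ℝ) : 𝕜)) := by
    rw [diagonal_fin_two]
    simp
  obtain ⟨h₀₁, h₁₀, h₁₁⟩ := norm_sq_entries_of_mem_unitaryGroup_fin_two hV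
  rw [hσ, trace_conjTranspose_mul_diagonal_mul_mul_diagonal]
  congr 1
  simp only [Fin.sum_univ_two, cons_val_zero, cons_val_one, h₀₁, h₁₀, h₁₁]
  ring

theorem Matrix.trace_conjTranspose_mul_sigmaZ_mul_mul_sigmaZ_eq_zero_iff
    {V : Matrix (Fin 2) (Fin 2) 𝕜} (hV : V ∈ unitaryGroup (Fin 2) 𝕜) :
    trace (Vᴴ * !![(1 : 𝕜), 0; 0, -1] * V * !![(1 : 𝕜), 0; 0, -1]) = 0 ↔
      ‖V 0 0‖ ^ 2 = 1 / 2 := by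
  rw [trace_conjTranspose_mul_sigmaZ_mul_mul_sigmaZ_of_mem_unitaryGroup hV, RCLike.ofReal_eq_zero]
  constructor <;> intro h <;> linarith

end

/-- For a unitary `2×2` matrix `V` and `σ_Z = !![1,0;0,−1]`, one has
`tr(Vᴴ σ_Z V σ_Z) = 0` iff `|V₀₀|² = 1/2`, and in that case all four entries of `V` have
absolute value `1/√2`. -/
theorem trace_sigmaZ_conj_eq_zero_iff (V : Matrix (Fin 2) (Fin 2) ℂ)
    (hV : V ∈ Matrix.unitaryGroup (Fin 2) ℂ) :
    (Matrix.trace (Vᴴ * !![(1 : ℂ), 0; 0, -1] * V * !![(1 : ℂ), 0; 0, -1]) = 0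
        ↔ ‖V 0 0‖ ^ 2 = 1 / 2)
      ∧ (Matrix.trace (Vᴴ * !![(1 : ℂ), 0; 0, -1] * V * !![(1 : ℂ), 0; 0, -1]) = 0 →
          ∀ i j : Fin 2, ‖V i j‖ = 1 / Real.sqrt 2) := by
  have htrace := trace_conjTranspose_mul_sigmaZ_mul_mul_sigmaZ_eq_zero_iff hV
  refine ⟨htrace, fun h i j ↦ ?_⟩
  have h₀₀ := htrace.mp h
  obtain ⟨h₀₁, h₁₀, h₁₁⟩ := norm_sq_entries_of_mem_unitaryGroup_fin_two hV
  have hij : ‖V i j‖ ^ 2 = 1 / 2 := by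
    fin_cases i <;> fin_cases j <;> simp only [Fin.zero_eta, Fin.mk_one] <;> linarith
  rw [← Real.sqrt_sq (norm_nonneg _), hij, Real.sqrt_div zero_le_one, Real.sqrt_one]
end

section
/- Let σ_X = !![0,1; 1,0], σ_Y = !![0,−i; i,0], σ_Z = !![1,0; 0,−1]. Then conjugation by the Pauli matrices permutes the Weyl walk transition matrices exactly as the corresponding π-rotations permute the BCC generators: σ_X·A₁·σ_X = A₂, σ_X·A₂·σ_X = A₁, σ_X·A₃·σ_X = A₄, σ_X·A₄·σ_X = A₃; σ_Y·A₁·σ_Y = A₃, σ_Y·A₂·σ_Y = A₄, σ_Y·A₃·σ_Y = A₁, σ_Y·A₄·σ_Y = A₂; σ_Z·A₁·σ_Z = A₄, σ_Z·A₂·σ_Z = A₃, σ_Z·A₃·σ_Z = A₂, σ_Z·A₄·σ_Z = A₁; and the same permutations hold with each Aᵢ replaced by Bᵢ. (These permutations match the action of the rotations diag(1,−1,−1), diag(−1,1,−1), diag(−1,−1,1) on the vectors h₁,h₂,h₃,h₄, so the Weyl walk is isotropic with isotropy representation {I, iσ_X, iσ_Y, iσ_Z}.) -/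
open Matrix Complex

/-- `σ_X`. -/
def sigmaX : Matrix (Fin 2) (Fin 2) ℂ := !![0, 1; 1, 0]
/-- `σ_Y`. -/
noncomputable def sigmaY : Matrix (Fin 2) (Fin 2) ℂ := !![0, -Complex.I; Complex.I, 0]
/-- `σ_Z`. -/
def sigmaZ : Matrix (Fin 2) (Fin 2) ℂ := !![1, 0; 0, -1]

lemma conjX (a b c d : ℂ) : sigmaX * !![a, b; c, d] * sigmaX = !![d, c; b, a] := by
  rw [sigmaX, Matrix.mul_fin_two, Matrix.mul_fin_two]
  ext i j
  fin_cases i <;> fin_cases j <;> simp <;> ring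

lemma conjY (a b c d : ℂ) : sigmaY * !![a, b; c, d] * sigmaY = !![d, -c; -b, a] := by
  rw [sigmaY, Matrix.mul_fin_two, Matrix.mul_fin_two]
  ext i j
  fin_cases i <;> fin_cases j <;> simp <;>
    first
      | ring1
      | linear_combination a * Complex.I_sq
      | linear_combination (-a) * Complex.I_sq
      | linear_combination b * Complex.I_sq
      | linear_combination (-b) * Complex.I_sq
      | linear_combination c * Complex.I_sq
      | linear_combination (-c) * Complex.I_sq
      | linear_combination d * Complex.I_sq
      | linear_combination (-d) * Complex.I_sq

lemma conjZ (a b c d : ℂ) : sigmaZ * !![a, b; c, d] * sigmaZ = !![a, -b; -c, d] := by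
  rw [sigmaZ, Matrix.mul_fin_two, Matrix.mul_fin_two]
  ext i j
  fin_cases i <;> fin_cases j <;> simp <;> ring

set_option maxHeartbeats 1000000 in
/-- Conjugation by the Pauli matrices permutes the Weyl walk transition matrices exactly
as the corresponding π-rotations `diag(1,−1,−1)`, `diag(−1,1,−1)`, `diag(−1,−1,1)`
permute the BCC generators `h₁, h₂, h₃, h₄`: the Weyl walk is isotropic with isotropy
representation `{I, iσ_X, iσ_Y, iσ_Z}`. -/
theorem weyl_walk_isotropy :
    (sigmaX * WeylA 0 * sigmaX = WeylA 1 ∧ sigmaX * WeylA 1 * sigmaX = WeylA 0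
      ∧ sigmaX * WeylA 2 * sigmaX = WeylA 3 ∧ sigmaX * WeylA 3 * sigmaX = WeylA 2)
    ∧ (sigmaY * WeylA 0 * sigmaY = WeylA 2 ∧ sigmaY * WeylA 1 * sigmaY = WeylA 3
      ∧ sigmaY * WeylA 2 * sigmaY = WeylA 0 ∧ sigmaY * WeylA 3 * sigmaY = WeylA 1)
    ∧ (sigmaZ * WeylA 0 * sigmaZ = WeylA 3 ∧ sigmaZ * WeylA 1 * sigmaZ = WeylA 2
      ∧ sigmaZ * WeylA 2 * sigmaZ = WeylA 1 ∧ sigmaZ * WeylA 3 * sigmaZ = WeylA 0)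
    ∧ (sigmaX * WeylB 0 * sigmaX = WeylB 1 ∧ sigmaX * WeylB 1 * sigmaX = WeylB 0
      ∧ sigmaX * WeylB 2 * sigmaX = WeylB 3 ∧ sigmaX * WeylB 3 * sigmaX = WeylB 2)
    ∧ (sigmaY * WeylB 0 * sigmaY = WeylB 2 ∧ sigmaY * WeylB 1 * sigmaY = WeylB 3
      ∧ sigmaY * WeylB 2 * sigmaY = WeylB 0 ∧ sigmaY * WeylB 3 * sigmaY = WeylB 1)
    ∧ (sigmaZ * WeylB 0 * sigmaZ = WeylB 3 ∧ sigmaZ * WeylB 1 * sigmaZ = WeylB 2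
      ∧ sigmaZ * WeylB 2 * sigmaZ = WeylB 1 ∧ sigmaZ * WeylB 3 * sigmaZ = WeylB 0) := by
  refine ⟨⟨?_,?_,?_,?_⟩,⟨?_,?_,?_,?_⟩,⟨?_,?_,?_,?_⟩,⟨?_,?_,?_,?_⟩,⟨?_,?_,?_,?_⟩,⟨?_,?_,?_,?_⟩⟩ <;>
    simp only [WeylA, WeylB, Matrix.cons_val_zero, Matrix.cons_val_one, Matrix.cons_val_two,
      Matrix.cons_val_three, Matrix.head_cons, Matrix.vecHead, Matrix.vecTail, Function.comp,
      Matrix.cons_val_succ, conjX, conjY, conjZ, neg_neg, neg_zero]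
end
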